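/- arXiv:2009.03069 — 2 statements merged into one kernel-verified Lean document; each statement's English description precedes it below -/
import Mathlib

section
/- Let (D_λ)_{λ∈Λ} be a family of integral domains, none of which is a field, each satisfying property (+), and let R = ∏_{λ∈Λ} D_λ. Then the maximal ideals of R are exactly the ideals of the form (U), where U is an ultrafilter in the Boolean algebra B containing an element of the form (V(a_λ))_{λ∈Λ} with a_λ ∈ D_λ \ {0} for all λ ∈ Λ. -/
/-!
Common setup: `Λ` is an index set, `D λ` a family of commutative rings,
`R = ∏ λ, D λ` the product ring, and
`B = ∏ λ, P(max (D λ))` the product Boolean algebra of the power sets of the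
sets of maximal ideals, realized as the Pi type `∀ l, Set (MaximalSpectrum (D l))`
with its componentwise Boolean algebra structure (meet = componentwise ∩,
join = componentwise ∪, `⊥ = (∅)_λ`, complement componentwise, order = componentwise ⊆).
-/

variable {Λ : Type*} {D : Λ → Type*}

/-- `S(a) = (V(a_λ))_λ ∈ B`, where `V(x)` is the set of maximal ideals containing `x`. -/
def SFam [∀ l, CommRing (D l)] (a : ∀ l, D l) : ∀ l, Set (MaximalSpectrum (D l)) :=
  fun l => {P | a l ∈ P.asIdeal}

/-- `z(x) = {λ | x_λ = 0}`. -/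
def ZFam [∀ l, CommRing (D l)] (x : ∀ l, D l) : Set Λ := {l | x l = 0}

/-- A filter in a Boolean algebra: a nonempty subset not containing `⊥`, closed
under meets, and upward closed. -/
def IsBFilter {B : Type*} [BooleanAlgebra B] (U : Set B) : Prop :=
  U.Nonempty ∧ ⊥ ∉ U ∧ (∀ X ∈ U, ∀ Y ∈ U, X ⊓ Y ∈ U) ∧ (∀ Y ∈ U, ∀ Z, Y ≤ Z → Z ∈ U)

/-- An ultrafilter in a Boolean algebra: a filter containing `Y` or `Yᶜ` for every `Y`. -/
def IsBUltrafilter {B : Type*} [BooleanAlgebra B] (U : Set B) : Prop :=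
  IsBFilter U ∧ ∀ Y, Y ∈ U ∨ Yᶜ ∈ U

/-- Property (+): for all `r` and all nonzero `a` there is `d` lying in every maximal
ideal containing `a` but not `r`, and in no maximal ideal containing `r`. -/
def PropertyPlus (A : Type*) [CommRing A] : Prop :=
  ∀ r a : A, a ≠ 0 → ∃ d : A,
    (∀ M : Ideal A, M.IsMaximal → a ∈ M → r ∉ M → d ∈ M) ∧
    (∀ M : Ideal A, M.IsMaximal → r ∈ M → d ∉ M)

/-- Property (++): for every `r` there is `d` with `D(r) = V(d)`, i.e. the maximal
ideals containing `d` are exactly those not containing `r`. -/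
def PropertyPlusPlus (A : Type*) [CommRing A] : Prop :=
  ∀ r : A, ∃ d : A, ∀ P : MaximalSpectrum A, d ∈ P.asIdeal ↔ r ∉ P.asIdeal

/-!
Identify `B` with the power set of the disjoint union `Σ λ, max (D λ)`. For a maximal ideal `M`
of `R`, the sets `S(r)`, `r ∈ M`, have the finite intersection property: if `S(r₁), …, S(rₙ)` had
empty meet, then in every factor the coordinates of the `rᵢ` would generate the unit ideal, and
choosing the Bézout coefficients coordinatewise would give `1 ∈ M`. Any ultrafilter `U` through
these sets gives a proper ideal `(U) ⊇ M`, hence `(U) = M`; since no `D λ` is a field, `M`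
contains an element with all coordinates nonzero.

Conversely, `(U)` is always a proper ideal. If `x ∉ (U)` then `¬S(x) ∈ U`, and property (+)
applied to `x` and the given `a` provides `d` comaximal with `x` such that
`S(a) ∧ ¬S(x) ≤ S(d)`. Writing `u x + v d = 1` gives `S(1 - u x) ∈ U`, so `1 ∈ (U) + (x)`.
-/

open Ideal Set

theorem isCoprime_of_forall_isMaximal {A : Type*} [CommRing A] {x y : A}
    (h : ∀ M : Ideal A, M.IsMaximal → x ∈ M → y ∉ M) : IsCoprime x y := by
  rw [← isCoprime_span_singleton_iff, isCoprime_iff_sup_eq]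
  by_contra hne
  obtain ⟨M, hM, hle⟩ := exists_le_maximal _ hne
  exact h M hM (hle (mem_sup_left (mem_span_singleton_self x)))
    (hle (mem_sup_right (mem_span_singleton_self y)))

theorem Pi.span_range_eq_top {ι : Type*} [Fintype ι] [∀ l, CommRing (D l)]
    (r : ι → ∀ l, D l) (h : ∀ l, span (range fun i => r i l) = ⊤) :
    span (range r) = ⊤ := by
  choose c hc using fun l =>
    (Submodule.mem_span_range_iff_exists_fun (D l)).1 ((h l).symm ▸ Submodule.mem_top (x := 1))
  have hsum : ∑ i, (fun l => c l i) * r i = 1 := by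
    funext l
    simpa only [Finset.sum_apply, Pi.mul_apply, Pi.one_apply, smul_eq_mul] using hc l
  rw [eq_top_iff_one, ← hsum]
  exact sum_mem fun i _ => mul_mem_left _ _ (subset_span (mem_range_self i))

theorem isBUltrafilter_setOf_univ_sigma_mem {X : Λ → Type*} (G : Ultrafilter (Σ l, X l)) :
    IsBUltrafilter {Y : ∀ l, Set (X l) | univ.sigma Y ∈ G} := by
  have sigma_top : univ.sigma (⊤ : ∀ l, Set (X l)) = univ := by ext; simp
  have sigma_bot : univ.sigma (⊥ : ∀ l, Set (X l)) = ∅ := by ext; simp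
  have sigma_inf (Y Z : ∀ l, Set (X l)) :
      univ.sigma (Y ⊓ Z) = univ.sigma Y ∩ univ.sigma Z := by ext; simp
  have sigma_compl (Y : ∀ l, Set (X l)) : univ.sigma Yᶜ = (univ.sigma Y)ᶜ := by ext; simp
  refine ⟨⟨⟨⊤, ?_⟩, ?_, fun Y hY Z hZ => ?_, fun Y hY Z hYZ => ?_⟩, fun Y => ?_⟩
  · exact (sigma_top ▸ Filter.univ_mem : univ.sigma ⊤ ∈ G)
  · exact (sigma_bot ▸ G.empty_notMem : univ.sigma ⊥ ∉ G)
  · exact (sigma_inf Y Z ▸ Filter.inter_mem hY hZ : univ.sigma (Y ⊓ Z) ∈ G)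
  · exact Filter.mem_of_superset hY (sigma_mono subset_rfl hYZ)
  · exact (em _).imp_right fun h => (sigma_compl Y ▸ G.compl_mem_iff_notMem.2 h : _ ∈ G)

section ProductRing

variable [∀ l, CommRing (D l)]

theorem SFam_one : SFam (1 : ∀ l, D l) = ⊥ :=
  funext fun _ => eq_empty_iff_forall_notMem.2 fun P hP =>
    P.isMaximal.ne_top ((eq_top_iff_one _).2 hP)

theorem SFam_inf_le_SFam_add (x y : ∀ l, D l) : SFam x ⊓ SFam y ≤ SFam (x + y) :=
  fun _ P hP => P.asIdeal.add_mem hP.1 hP.2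

theorem SFam_le_SFam_mul (x y : ∀ l, D l) : SFam y ≤ SFam (x * y) :=
  fun _ P hP => P.asIdeal.mul_mem_left _ hP

theorem exists_maximalSpectrum_forall_mem_of_subset {I : Ideal (∀ l, D l)} (hI : I ≠ ⊤)
    (s : Finset (∀ l, D l)) (hs : ↑s ⊆ (I : Set (∀ l, D l))) :
    ∃ l, ∃ P : MaximalSpectrum (D l), ∀ r ∈ s, r l ∈ P.asIdeal := by
  by_contra! h
  refine hI (top_le_iff.1 ?_)
  rw [← Pi.span_range_eq_top (fun r : s => (r : ∀ l, D l)) fun l => ?_, span_le]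
  · exact range_subset_iff.2 fun r => hs r.2
  by_contra hne
  obtain ⟨P, hP, hle⟩ := exists_le_maximal _ hne
  obtain ⟨r, hrs, hrP⟩ := h l ⟨P, hP⟩
  exact hrP (hle (subset_span ⟨⟨r, hrs⟩, rfl⟩))

theorem exists_isBUltrafilter_forall_SFam_mem {I : Ideal (∀ l, D l)} (hI : I ≠ ⊤) :
    ∃ U : Set (∀ l, Set (MaximalSpectrum (D l))), IsBUltrafilter U ∧ ∀ r ∈ I, SFam r ∈ U := by
  classical
  obtain ⟨G, hG⟩ := Ultrafilter.exists_ultrafilter_of_finite_inter_nonempty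
    ((fun r => univ.sigma (SFam r)) '' (I : Set (∀ l, D l))) fun T hT => by
      obtain ⟨s, hsI, rfl⟩ := Finset.subset_set_image_iff.1 hT
      obtain ⟨l, P, hP⟩ := exists_maximalSpectrum_forall_mem_of_subset hI s hsI
      exact ⟨⟨l, P⟩, by simpa [SFam] using hP⟩
  exact ⟨_, isBUltrafilter_setOf_univ_sigma_mem G, fun r hr => hG (mem_image_of_mem _ hr)⟩

/-- The ideal `(U)` of the paper. -/
def idealOfBFilter (U : Set (∀ l, Set (MaximalSpectrum (D l)))) (hU : IsBFilter U) :
    Ideal (∀ l, D l) where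
  carrier := {r | SFam r ∈ U}
  zero_mem' := by
    obtain ⟨⟨Y, hY⟩, -, -, hup⟩ := hU
    exact hup Y hY _ fun l P _ => zero_mem P.asIdeal
  add_mem' {x y} hx hy := hU.2.2.2 _ (hU.2.2.1 _ hx _ hy) _ (SFam_inf_le_SFam_add x y)
  smul_mem' c x hx := hU.2.2.2 _ hx _ (SFam_le_SFam_mul c x)

theorem mem_idealOfBFilter {U : Set (∀ l, Set (MaximalSpectrum (D l)))} (hU : IsBFilter U)
    (r : ∀ l, D l) : r ∈ idealOfBFilter U hU ↔ SFam r ∈ U :=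
  Iff.rfl

theorem idealOfBFilter_ne_top {U : Set (∀ l, Set (MaximalSpectrum (D l)))} (hU : IsBFilter U) :
    idealOfBFilter U hU ≠ ⊤ := by
  rw [ne_eq, eq_top_iff_one, mem_idealOfBFilter, SFam_one]
  exact hU.2.1

theorem isMaximal_idealOfBFilter (hplus : ∀ l, PropertyPlus (D l))
    {U : Set (∀ l, Set (MaximalSpectrum (D l)))} (hU : IsBUltrafilter U) {a : ∀ l, D l}
    (ha : ∀ l, a l ≠ 0) (haU : SFam a ∈ U) : (idealOfBFilter U hU.1).IsMaximal := by
  refine isMaximal_iff.2 ⟨fun h => idealOfBFilter_ne_top hU.1 ((eq_top_iff_one _).2 h),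
    fun J x hle hx hxJ => ?_⟩
  obtain ⟨-, -, hinf, hup⟩ := hU.1
  have hxc : (SFam x)ᶜ ∈ U := (hU.2 _).resolve_left hx
  choose d hda hdx using fun l => hplus l (x l) (a l) (ha l)
  choose u v huv using fun l => isCoprime_of_forall_isMaximal (hdx l)
  have hsub : SFam a ⊓ (SFam x)ᶜ ≤ SFam (1 - u * x) := by
    intro l P ⟨haP, hxP⟩
    have : (1 - u * x) l = v l * d l := by
      simp only [Pi.sub_apply, Pi.mul_apply, Pi.one_apply]
      linear_combination -(huv l)
    rw [SFam, mem_ofPred_eq, this]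
    exact mul_mem_left _ _ (hda l P.asIdeal P.isMaximal haP hxP)
  have h1 : 1 - u * x ∈ J := hle (hup _ (hinf _ haU _ hxc) _ hsub)
  simpa using add_mem h1 (J.mul_mem_left u hxJ)

theorem exists_forall_ne_zero_mem_of_isMaximal [∀ l, Nontrivial (D l)]
    (hnf : ∀ l, ¬IsField (D l)) {M : Ideal (∀ l, D l)} (hM : M.IsMaximal) :
    ∃ a : ∀ l, D l, (∀ l, a l ≠ 0) ∧ a ∈ M := by
  choose c hc0 hcu using fun l => Ring.exists_not_isUnit_of_not_isField (hnf l)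
  by_cases hcM : c ∈ M
  · exact ⟨c, hc0, hcM⟩
  obtain ⟨y, i, hiM, hyi⟩ := hM.exists_inv hcM
  refine ⟨i, fun l hil => hcu l (IsUnit.of_mul_eq_one_right (y l) ?_), hiM⟩
  simpa [hil] using congrFun hyi l

end ProductRing

/-- If every `D l` is an integral domain, not a field, satisfying property (+), then
the maximal ideals of `R` are exactly the ideals `(U)` for ultrafilters `U` in `B`
containing an element of the form `S a` with all components of `a` nonzero. -/
theorem stmt_7 [∀ l, CommRing (D l)] [∀ l, IsDomain (D l)]
    (hnf : ∀ l, ¬IsField (D l)) (hplus : ∀ l, PropertyPlus (D l)) :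
    (∀ M : Ideal (∀ l, D l), M.IsMaximal →
      ∃ U : Set (∀ l, Set (MaximalSpectrum (D l))), IsBUltrafilter U ∧
        (∃ a : ∀ l, D l, (∀ l, a l ≠ 0) ∧ SFam a ∈ U) ∧
        ∀ r : ∀ l, D l, r ∈ M ↔ SFam r ∈ U) ∧
    (∀ U : Set (∀ l, Set (MaximalSpectrum (D l))), IsBUltrafilter U →
      (∃ a : ∀ l, D l, (∀ l, a l ≠ 0) ∧ SFam a ∈ U) →
      ∃ M : Ideal (∀ l, D l), M.IsMaximal ∧ ∀ r : ∀ l, D l, r ∈ M ↔ SFam r ∈ U) := by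
  refine ⟨fun M hM => ?_, fun U hU ⟨a, ha, haU⟩ =>
    ⟨_, isMaximal_idealOfBFilter hplus hU ha haU, mem_idealOfBFilter hU.1⟩⟩
  obtain ⟨U, hU, hMU⟩ := exists_isBUltrafilter_forall_SFam_mem hM.ne_top
  have hM_eq : M = idealOfBFilter U hU.1 := hM.eq_of_le (idealOfBFilter_ne_top hU.1) hMU
  obtain ⟨a, ha, haM⟩ := exists_forall_ne_zero_mem_of_isMaximal hnf hM
  exact ⟨U, hU, ⟨a, ha, hMU a haM⟩, fun r => hM_eq ▸ mem_idealOfBFilter hU.1 r⟩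
end

section
/- Let (D_λ)_{λ∈Λ} be a family of integral domains and T a subring of R = ∏_{λ∈Λ} D_λ such that for every subset Z ⊆ Λ there exists x ∈ T with z(x) = Z. Then the map F ↦ (0)_F^T is a bijection between the set of ultrafilters on Λ and the set of minimal prime ideals of T. -/
/-!
Common setup: `Λ` is an index set, `D λ` a family of commutative rings,
`R = ∏ λ, D λ` the product ring, and
`B = ∏ λ, P(max (D λ))` the product Boolean algebra of the power sets of the
sets of maximal ideals, realized as the Pi type `∀ l, Set (MaximalSpectrum (D l))`
with its componentwise Boolean algebra structure (meet = componentwise ∩,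
join = componentwise ∪, `⊥ = (∅)_λ`, complement componentwise, order = componentwise ⊆).
-/

variable {Λ : Type*} {D : Λ → Type*}

/-!
`(0)_F^T` is prime because `z(xy) = z(x) ∪ z(y)` in a product of domains, and it is minimal
because each `x` with `z(x) ∈ F` is killed by some `y ∈ T` with `z(y) = z(x)ᶜ ∉ F`.
Conversely, for a prime `I` of `T` the sets `z(x)ᶜ` with `x ∉ I` form a downward directed
family of nonempty sets (`z(xy)ᶜ ⊆ z(x)ᶜ ∩ z(y)ᶜ`), so they lie in an ultrafilter `F`, and
then `(0)_F^T ⊆ I`; minimality of `I` forces equality. Injectivity holds because every subset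
of `Λ` is a zero set in `T`.
-/

section ZeroSet

variable [∀ l, CommRing (D l)]

lemma ZFam_eq_univ_iff {x : ∀ l, D l} : ZFam x = Set.univ ↔ x = 0 := by
  simp [ZFam, Set.eq_univ_iff_forall, funext_iff]

lemma ZFam_union_subset_ZFam_mul (x y : ∀ l, D l) : ZFam x ∪ ZFam y ⊆ ZFam (x * y) := by
  rintro l (hx | hy) <;> simp_all [ZFam]

lemma ZFam_inter_subset_ZFam_add (x y : ∀ l, D l) : ZFam x ∩ ZFam y ⊆ ZFam (x + y) := by
  rintro l ⟨hx, hy⟩; simp_all [ZFam]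

lemma mul_eq_zero_of_ZFam_union_eq_univ {x y : ∀ l, D l} (h : ZFam x ∪ ZFam y = Set.univ) :
    x * y = 0 :=
  ZFam_eq_univ_iff.mp <| Set.univ_subset_iff.mp <| h ▸ ZFam_union_subset_ZFam_mul x y

lemma ZFam_mul [∀ l, NoZeroDivisors (D l)] (x y : ∀ l, D l) :
    ZFam (x * y) = ZFam x ∪ ZFam y := by
  ext l; simp [ZFam, mul_eq_zero]

lemma ZFam_one [∀ l, Nontrivial (D l)] : ZFam (1 : ∀ l, D l) = ∅ := by
  ext l; simp [ZFam]

/-- The ideal `(0)_F` of `∏ λ, D λ`; for a subring `T`, `(0)_F^T` is its `comap T.subtype`. -/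
def zeroIdeal (F : Filter Λ) : Ideal (∀ l, D l) where
  carrier := {x | ZFam x ∈ F}
  zero_mem' := by simp [ZFam_eq_univ_iff.mpr rfl]
  add_mem' hx hy :=
    Filter.mem_of_superset (Filter.inter_mem hx hy) (ZFam_inter_subset_ZFam_add _ _)
  smul_mem' c _ hx := Filter.mem_of_superset hx
    (Set.subset_union_right.trans (ZFam_union_subset_ZFam_mul c _))

@[simp]
lemma mem_zeroIdeal {F : Filter Λ} {x : ∀ l, D l} : x ∈ zeroIdeal F ↔ ZFam x ∈ F := Iff.rfl

instance zeroIdeal_isPrime [∀ l, IsDomain (D l)] (F : Ultrafilter Λ) :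
    (zeroIdeal (F : Filter Λ) : Ideal (∀ l, D l)).IsPrime where
  ne_top' h := F.empty_notMem <| by
    simpa [ZFam_one] using
      (h ▸ Submodule.mem_top : (1 : ∀ l, D l) ∈ zeroIdeal (F : Filter Λ))
  mem_or_mem' {x y} h := by simpa [ZFam_mul, Ultrafilter.union_mem_iff] using h

lemma comap_zeroIdeal_mem_minimalPrimes [∀ l, IsDomain (D l)] {T : Subring (∀ l, D l)}
    (hT : ∀ Z : Set Λ, ∃ x ∈ T, ZFam x = Z) (F : Ultrafilter Λ) :
    (zeroIdeal (F : Filter Λ)).comap T.subtype ∈ minimalPrimes T := by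
  refine ⟨⟨Ideal.comap_isPrime _ _, bot_le⟩, fun J ⟨hJ, _⟩ hJle x hx => ?_⟩
  obtain ⟨y, hyT, hy⟩ := hT (ZFam (x : ∀ l, D l))ᶜ
  have hxy : x * ⟨y, hyT⟩ = 0 :=
    Subtype.ext <| mul_eq_zero_of_ZFam_union_eq_univ <| by simp [hy]
  have hyJ : (⟨y, hyT⟩ : T) ∉ J := fun h =>
    Ultrafilter.compl_notMem_iff.mpr hx (by simpa [hy] using hJle h)
  exact (hJ.mem_or_mem (hxy ▸ J.zero_mem)).resolve_right hyJ

lemma exists_comap_zeroIdeal_le {T : Subring (∀ l, D l)} (I : Ideal T) [I.IsPrime] :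
    ∃ F : Ultrafilter Λ, (zeroIdeal (F : Filter Λ)).comap T.subtype ≤ I := by
  let f : I.primeCompl → Filter Λ := fun x => Filter.principal (ZFam (x : ∀ l, D l))ᶜ
  have hdir : Directed (· ≥ ·) f := fun x y => ⟨x * y, by
    simp only [f, ge_iff_le, Filter.principal_mono, Set.compl_subset_compl]
    exact ⟨Set.subset_union_left.trans (ZFam_union_subset_ZFam_mul _ _),
      Set.subset_union_right.trans (ZFam_union_subset_ZFam_mul _ _)⟩⟩
  have hne (x : I.primeCompl) : (f x).NeBot := by
    refine Filter.principal_neBot_iff.mpr (Set.nonempty_compl.mpr fun h => x.2 ?_)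
    have hx0 : (x : T) = 0 := Subtype.ext (ZFam_eq_univ_iff.mp h)
    exact hx0 ▸ I.zero_mem
  have := Filter.iInf_neBot_of_directed' hdir hne
  obtain ⟨F, hF⟩ := Ultrafilter.exists_le (⨅ x, f x)
  refine ⟨F, fun x hx => by_contra fun hxI => F.empty_notMem ?_⟩
  have hcompl : (ZFam (x : ∀ l, D l))ᶜ ∈ F :=
    hF (Filter.mem_iInf_of_mem ⟨x, hxI⟩ (Filter.mem_principal_self _))
  simpa using F.inter_mem hx hcompl

end ZeroSet

/-- If the `D l` are integral domains and `T ⊆ R` is a subring such that every subset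
of `Λ` is the zero set `z x` of some `x ∈ T`, then `F ↦ (0)_F^T` is a bijection
between ultrafilters on `Λ` and minimal prime ideals of `T`: it is well defined
(each such set is a minimal prime), injective, and surjective. -/
theorem stmt_15 [∀ l, CommRing (D l)] [∀ l, IsDomain (D l)]
    (T : Subring (∀ l, D l)) (hT : ∀ Z : Set Λ, ∃ x ∈ T, ZFam x = Z) :
    (∀ F : Ultrafilter Λ, ∃ I : Ideal T, I ∈ minimalPrimes T ∧
      ∀ x : T, x ∈ I ↔ ZFam (x : ∀ l, D l) ∈ F) ∧
    (∀ F G : Ultrafilter Λ,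
      (∀ x : T, ZFam (x : ∀ l, D l) ∈ F ↔ ZFam (x : ∀ l, D l) ∈ G) → F = G) ∧
    (∀ I : Ideal T, I ∈ minimalPrimes T →
      ∃ F : Ultrafilter Λ, ∀ x : T, x ∈ I ↔ ZFam (x : ∀ l, D l) ∈ F) := by
  refine ⟨fun F => ⟨_, comap_zeroIdeal_mem_minimalPrimes hT F, fun _ => Iff.rfl⟩,
    fun F G h => Ultrafilter.ext fun s => ?_, fun I hI => ?_⟩
  · obtain ⟨x, hxT, rfl⟩ := hT s
    exact h ⟨x, hxT⟩
  · have : I.IsPrime := hI.1.1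
    obtain ⟨F, hF⟩ := exists_comap_zeroIdeal_le I
    have hIF : I = (zeroIdeal (F : Filter Λ)).comap T.subtype :=
      le_antisymm (hI.2 ⟨Ideal.comap_isPrime _ _, bot_le⟩ hF) hF
    exact ⟨F, fun x => hIF ▸ Iff.rfl⟩
end
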